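/- Let φ : M₃ → M₃ be a linear preserver of the Lorentz spectrum with associated orthogonal matrix Q. Then φ([Ã 0; 0ᵀ 0]) = [Q Ã Qᵀ 0; 0ᵀ 0] for all Ã ∈ M₂. -/

import Mathlib

open Matrix

noncomputable section

/-- Euclidean norm of a vector in `ℝ^n`. -/
def euclidNorm {n : ℕ} (x : Fin n → ℝ) : ℝ := Real.sqrt (∑ i, x i ^ 2)

/-- The Lorentz cone in `ℝ^(n+1)`: vectors `(ξ, η)` with `‖ξ‖ ≤ η`. -/
def lorentzCone (n : ℕ) : Set (Fin (n + 1) → ℝ) :=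
  {x | euclidNorm (fun i : Fin n => x i.castSucc) ≤ x (Fin.last n)}

/-- `x` is a Lorentz eigenvector of `A` associated with the Lorentz eigenvalue `l`. -/
def IsLEigenvector {n : ℕ} (A : Matrix (Fin (n + 1)) (Fin (n + 1)) ℝ) (l : ℝ)
    (x : Fin (n + 1) → ℝ) : Prop :=
  x ≠ 0 ∧ x ∈ lorentzCone n ∧ (A - l • 1) *ᵥ x ∈ lorentzCone n ∧
    x ⬝ᵥ ((A - l • 1) *ᵥ x) = 0

/-- The Lorentz spectrum of `A`. -/
def sigmaL {n : ℕ} (A : Matrix (Fin (n + 1)) (Fin (n + 1)) ℝ) : Set ℝ :=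
  {l | ∃ x, IsLEigenvector A l x}

/-- The interior Lorentz spectrum of `A`. -/
def sigmaInt {n : ℕ} (A : Matrix (Fin (n + 1)) (Fin (n + 1)) ℝ) : Set ℝ :=
  {l | ∃ x, IsLEigenvector A l x ∧
    euclidNorm (fun i : Fin n => x i.castSucc) < x (Fin.last n)}

/-- The boundary Lorentz spectrum of `A`. -/
def sigmaBd {n : ℕ} (A : Matrix (Fin (n + 1)) (Fin (n + 1)) ℝ) : Set ℝ :=
  {l | ∃ x, IsLEigenvector A l x ∧
    euclidNorm (fun i : Fin n => x i.castSucc) = x (Fin.last n)}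

/-- The block matrix `[X u; vᵀ a]` in `M₃`. -/
def blk (X : Matrix (Fin 2) (Fin 2) ℝ) (u v : Fin 2 → ℝ) (a : ℝ) :
    Matrix (Fin 3) (Fin 3) ℝ :=
  Matrix.of (Fin.snoc (fun i : Fin 2 => Fin.snoc (X i) (u i)) (Fin.snoc v a))

/-- square of the euclidean norm of a 2-vector -/
def SQ (ξ : Fin 2 → ℝ) : ℝ := ξ 0 ^ 2 + ξ 1 ^ 2

lemma SQ_nonneg (ξ : Fin 2 → ℝ) : 0 ≤ SQ ξ := by unfold SQ; positivity

@[simp] lemma blk00 (X : Matrix (Fin 2) (Fin 2) ℝ) (u v : Fin 2 → ℝ) (a : ℝ) :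
    blk X u v a 0 0 = X 0 0 := by simp [blk, Fin.snoc]
@[simp] lemma blk01 (X : Matrix (Fin 2) (Fin 2) ℝ) (u v : Fin 2 → ℝ) (a : ℝ) :
    blk X u v a 0 1 = X 0 1 := by simp [blk, Fin.snoc]
@[simp] lemma blk02 (X : Matrix (Fin 2) (Fin 2) ℝ) (u v : Fin 2 → ℝ) (a : ℝ) :
    blk X u v a 0 2 = u 0 := by simp [blk, Fin.snoc]
@[simp] lemma blk10 (X : Matrix (Fin 2) (Fin 2) ℝ) (u v : Fin 2 → ℝ) (a : ℝ) :
    blk X u v a 1 0 = X 1 0 := by simp [blk, Fin.snoc]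
@[simp] lemma blk11 (X : Matrix (Fin 2) (Fin 2) ℝ) (u v : Fin 2 → ℝ) (a : ℝ) :
    blk X u v a 1 1 = X 1 1 := by simp [blk, Fin.snoc]
@[simp] lemma blk12 (X : Matrix (Fin 2) (Fin 2) ℝ) (u v : Fin 2 → ℝ) (a : ℝ) :
    blk X u v a 1 2 = u 1 := by simp [blk, Fin.snoc]
@[simp] lemma blk20 (X : Matrix (Fin 2) (Fin 2) ℝ) (u v : Fin 2 → ℝ) (a : ℝ) :
    blk X u v a 2 0 = v 0 := by simp [blk, Fin.snoc]
@[simp] lemma blk21 (X : Matrix (Fin 2) (Fin 2) ℝ) (u v : Fin 2 → ℝ) (a : ℝ) :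
    blk X u v a 2 1 = v 1 := by simp [blk, Fin.snoc]
@[simp] lemma blk22 (X : Matrix (Fin 2) (Fin 2) ℝ) (u v : Fin 2 → ℝ) (a : ℝ) :
    blk X u v a 2 2 = a := by simp [blk, Fin.snoc]

lemma mulVec3 (M : Matrix (Fin 3) (Fin 3) ℝ) (x : Fin 3 → ℝ) (i : Fin 3) :
    (M *ᵥ x) i = M i 0 * x 0 + M i 1 * x 1 + M i 2 * x 2 := by
  simp [mulVec, dotProduct, Fin.sum_univ_three]

lemma dot3 (x y : Fin 3 → ℝ) : x ⬝ᵥ y = x 0 * y 0 + x 1 * y 1 + x 2 * y 2 := by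
  simp [dotProduct, Fin.sum_univ_three]

lemma one3 : ∀ i j : Fin 3, (1 : Matrix (Fin 3) (Fin 3) ℝ) i j = if i = j then 1 else 0 := by
  intro i j; simp [Matrix.one_apply]

lemma mem_cone_iff (x : Fin 3 → ℝ) :
    x ∈ lorentzCone 2 ↔ 0 ≤ x 2 ∧ x 0 ^ 2 + x 1 ^ 2 ≤ x 2 ^ 2 := by
  have h0 : (fun i : Fin 2 => x i.castSucc) = fun i : Fin 2 => x ⟨i.val, by omega⟩ := rfl
  show euclidNorm _ ≤ x (Fin.last 2) ↔ _
  have : euclidNorm (fun i : Fin 2 => x i.castSucc) = Real.sqrt (x 0 ^ 2 + x 1 ^ 2) := by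
    unfold euclidNorm
    congr 1
    rw [Fin.sum_univ_two]
    rfl
  rw [this]
  have hl : x (Fin.last 2) = x 2 := rfl
  rw [hl, Real.sqrt_le_iff]


lemma subMulVec0 (X : Matrix (Fin 2) (Fin 2) ℝ) (u y : Fin 2 → ℝ) (a lam : ℝ) (xx : Fin 3 → ℝ) :
    ((blk X u y a - lam • (1:Matrix (Fin 3) (Fin 3) ℝ)) *ᵥ xx) 0
      = X 0 0 * xx 0 + X 0 1 * xx 1 + u 0 * xx 2 - lam * xx 0 := by
  rw [Matrix.sub_mulVec, Matrix.smul_mulVec, Matrix.one_mulVec]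
  show (blk X u y a *ᵥ xx) 0 - (lam • xx) 0 = _
  rw [mulVec3]; simp

lemma subMulVec1 (X : Matrix (Fin 2) (Fin 2) ℝ) (u y : Fin 2 → ℝ) (a lam : ℝ) (xx : Fin 3 → ℝ) :
    ((blk X u y a - lam • (1:Matrix (Fin 3) (Fin 3) ℝ)) *ᵥ xx) 1
      = X 1 0 * xx 0 + X 1 1 * xx 1 + u 1 * xx 2 - lam * xx 1 := by
  rw [Matrix.sub_mulVec, Matrix.smul_mulVec, Matrix.one_mulVec]
  show (blk X u y a *ᵥ xx) 1 - (lam • xx) 1 = _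
  rw [mulVec3]; simp

lemma subMulVec2 (X : Matrix (Fin 2) (Fin 2) ℝ) (u y : Fin 2 → ℝ) (a lam : ℝ) (xx : Fin 3 → ℝ) :
    ((blk X u y a - lam • (1:Matrix (Fin 3) (Fin 3) ℝ)) *ᵥ xx) 2
      = y 0 * xx 0 + y 1 * xx 1 + a * xx 2 - lam * xx 2 := by
  rw [Matrix.sub_mulVec, Matrix.smul_mulVec, Matrix.one_mulVec]
  show (blk X u y a *ᵥ xx) 2 - (lam • xx) 2 = _
  rw [mulVec3]; simp

set_option maxHeartbeats 2000000 in
/-- membership characterization -/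
theorem mem_sigmaL_iff (X : Matrix (Fin 2) (Fin 2) ℝ) (u y : Fin 2 → ℝ) (a lam : ℝ) :
    lam ∈ sigmaL (blk X u y a) ↔
    ∃ (ξ : Fin 2 → ℝ) (t : ℝ), 0 ≤ t ∧ ((t = 0 ∧ SQ ξ < 1) ∨ SQ ξ = 1) ∧
      (X 0 0 * ξ 0 + X 0 1 * ξ 1 + u 0 = (lam - t) * ξ 0) ∧
      (X 1 0 * ξ 0 + X 1 1 * ξ 1 + u 1 = (lam - t) * ξ 1) ∧
      lam + t = y 0 * ξ 0 + y 1 * ξ 1 + a := by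
  constructor
  · rintro ⟨x, hx0, hxc, hyc, hcomp⟩
    rw [mem_cone_iff] at hxc
    rw [mem_cone_iff, subMulVec0, subMulVec1, subMulVec2] at hyc
    rw [dot3, subMulVec0, subMulVec1, subMulVec2] at hcomp
    set z0 := X 0 0 * x 0 + X 0 1 * x 1 + u 0 * x 2 - lam * x 0 with hz0
    set z1 := X 1 0 * x 0 + X 1 1 * x 1 + u 1 * x 2 - lam * x 1 with hz1
    set τ := y 0 * x 0 + y 1 * x 1 + a * x 2 - lam * x 2 with hz2
    obtain ⟨hη, hS⟩ := hxc
    obtain ⟨hτ, hN⟩ := hyc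
    have hηpos : 0 < x 2 := by
      rcases lt_or_eq_of_le hη with h | h
      · exact h
      · exfalso
        apply hx0
        have h2 : x 2 = 0 := h.symm
        have h01 : x 0 = 0 ∧ x 1 = 0 := by
          constructor <;> nlinarith [hS, sq_nonneg (x 0), sq_nonneg (x 1)]
        funext i
        fin_cases i
        · exact h01.1
        · exact h01.2
        · exact h2
    have hw : (x 2 * z0 + τ * x 0) ^ 2 + (x 2 * z1 + τ * x 1) ^ 2 ≤ 0 := by
      have e1 : x 2^2 * (z0^2 + z1^2) ≤ x 2^2 * τ^2 := by nlinarith [sq_nonneg (x 2)]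
      have e2 : τ^2 * (x 0^2 + x 1^2) ≤ τ^2 * (x 2)^2 := by nlinarith [sq_nonneg τ]
      have hexp : (x 2 * z0 + τ * x 0) ^ 2 + (x 2 * z1 + τ * x 1) ^ 2
          = x 2^2*(z0^2+z1^2) + τ^2*(x 0^2 + x 1^2) - 2*(x 2)^2*τ^2
            + 2*(x 2)*τ*(x 0 * z0 + x 1 * z1 + x 2 * τ) := by ring
      rw [hexp, hcomp]
      linarith [e1, e2]
    have key0 : x 2 * z0 + τ * x 0 = 0 := by
      nlinarith [sq_nonneg (x 2 * z0 + τ * x 0), sq_nonneg (x 2 * z1 + τ * x 1)]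
    have key1 : x 2 * z1 + τ * x 1 = 0 := by
      nlinarith [sq_nonneg (x 2 * z0 + τ * x 0), sq_nonneg (x 2 * z1 + τ * x 1)]
    have hcompl : τ * ((x 2)^2 - (x 0^2 + x 1^2)) = 0 := by
      linear_combination (x 2) * hcomp - (x 0) * key0 - (x 1) * key1
    refine ⟨![x 0 / x 2, x 1 / x 2], τ / x 2, by positivity, ?_, ?_, ?_, ?_⟩
    · by_cases hb : x 0 ^2 + x 1^2 = (x 2)^2
      · right
        show (x 0 / x 2)^2 + (x 1 / x 2)^2 = 1
        field_simp
        linarith [hb]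
      · left
        have hτ0 : τ = 0 := by
          rcases mul_eq_zero.mp hcompl with h | h
          · exact h
          · exfalso; apply hb; nlinarith [h]
        constructor
        · rw [hτ0]; simp
        · show (x 0 / x 2)^2 + (x 1 / x 2)^2 < 1
          rw [div_pow, div_pow, ← add_div, div_lt_one (by positivity)]
          rcases lt_or_eq_of_le hS with h | h
          · exact h
          · exact absurd h hb
    · show X 0 0 * (x 0 / x 2) + X 0 1 * (x 1 / x 2) + u 0 = (lam - τ / x 2) * (x 0 / x 2)
      have h1 := hz0
      field_simp
      nlinarith [key0]
    · show X 1 0 * (x 0 / x 2) + X 1 1 * (x 1 / x 2) + u 1 = (lam - τ / x 2) * (x 1 / x 2)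
      field_simp
      nlinarith [key1]
    · show lam + τ / x 2 = y 0 * (x 0 / x 2) + y 1 * (x 1 / x 2) + a
      field_simp
      nlinarith [hz2]
  · rintro ⟨ξ, t, ht, hd, he0, he1, hl⟩
    have hSQ1 : SQ ξ ≤ 1 := by rcases hd with ⟨_, h⟩ | h <;> [linarith; linarith]
    have c0 : (![ξ 0, ξ 1, 1] : Fin 3 → ℝ) 0 = ξ 0 := rfl
    have c1 : (![ξ 0, ξ 1, 1] : Fin 3 → ℝ) 1 = ξ 1 := rfl
    have c2 : (![ξ 0, ξ 1, 1] : Fin 3 → ℝ) 2 = 1 := rfl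
    refine ⟨![ξ 0, ξ 1, 1], ?_, ?_, ?_, ?_⟩
    · intro h
      have := congrFun h 2
      simp at this
    · rw [mem_cone_iff, c0, c1, c2]
      refine ⟨by norm_num, by unfold SQ at hSQ1; nlinarith [hSQ1]⟩
    · rw [mem_cone_iff, subMulVec0, subMulVec1, subMulVec2, c0, c1, c2]
      constructor
      · have : y 0 * ξ 0 + y 1 * ξ 1 + a * 1 - lam * 1 = t := by linarith [hl]
        linarith [this, ht]
      · have e0 : X 0 0 * ξ 0 + X 0 1 * ξ 1 + u 0 * 1 - lam * ξ 0 = -t * ξ 0 := by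
          nlinarith [he0]
        have e1 : X 1 0 * ξ 0 + X 1 1 * ξ 1 + u 1 * 1 - lam * ξ 1 = -t * ξ 1 := by
          nlinarith [he1]
        have e2 : y 0 * ξ 0 + y 1 * ξ 1 + a * 1 - lam * 1 = t := by linarith [hl]
        rw [e0, e1, e2]
        have hq : (-t * ξ 0)^2 + (-t * ξ 1)^2 = t^2 * SQ ξ := by unfold SQ; ring
        rw [hq]
        nlinarith [sq_nonneg t]
    · rw [dot3, subMulVec0, subMulVec1, subMulVec2, c0, c1, c2]
      have e0 : X 0 0 * ξ 0 + X 0 1 * ξ 1 + u 0 * 1 - lam * ξ 0 = -t * ξ 0 := by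
        nlinarith [he0]
      have e1 : X 1 0 * ξ 0 + X 1 1 * ξ 1 + u 1 * 1 - lam * ξ 1 = -t * ξ 1 := by
        nlinarith [he1]
      have e2 : y 0 * ξ 0 + y 1 * ξ 1 + a * 1 - lam * 1 = t := by linarith [hl]
      rw [e0, e1, e2]
      have hq : ξ 0 * (-t * ξ 0) + ξ 1 * (-t * ξ 1) + 1 * t = t * (1 - SQ ξ) := by
        unfold SQ; ring
      rw [hq]
      rcases hd with ⟨h, _⟩ | h
      · rw [h]; ring
      · rw [h]; ring

section Tool

lemma sq3 (p q r : ℝ) : (p+q+r)^2 ≤ 3*(p^2+q^2+r^2) := by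
  nlinarith [sq_nonneg (p-q), sq_nonneg (p-r), sq_nonneg (q-r)]

/-- Cramer: homogeneous 2x2 system with independent rows -/
lemma cramer0 {p q a0 a1 b0 b1 : ℝ} (h1 : p*a0 + q*a1 = 0) (h2 : p*b0 + q*b1 = 0)
    (hD : a0*b1 - a1*b0 ≠ 0) : p = 0 ∧ q = 0 := by
  constructor
  · have : p * (a0*b1 - a1*b0) = 0 := by linear_combination b1 * h1 - a1 * h2
    exact (mul_eq_zero.mp this).resolve_right hD
  · have : q * (a0*b1 - a1*b0) = 0 := by linear_combination -b0 * h1 + a0 * h2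
    exact (mul_eq_zero.mp this).resolve_right hD

lemma expand2 {a0 a1 b0 b1 : ℝ} (hD : a0*b1 - a1*b0 ≠ 0) (x0 x1 : ℝ) :
    ∃ α β : ℝ, x0 = α*a0 + β*b0 ∧ x1 = α*a1 + β*b1 := by
  refine ⟨(x0*b1 - x1*b0)/(a0*b1 - a1*b0), (a0*x1 - a1*x0)/(a0*b1 - a1*b0), ?_, ?_⟩ <;>
    (rw [div_mul_eq_mul_div, div_mul_eq_mul_div, ← add_div, eq_div_iff hD]; ring)

/-- eigenvalue of 2x2 satisfies char poly -/
lemma eig_charpoly {X00 X01 X10 X11 ρ ξ0 ξ1 : ℝ} (hne : ¬(ξ0 = 0 ∧ ξ1 = 0))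
    (he0 : X00*ξ0 + X01*ξ1 = ρ*ξ0) (he1 : X10*ξ0 + X11*ξ1 = ρ*ξ1) :
    ρ^2 - (X00+X11)*ρ + (X00*X11 - X01*X10) = 0 := by
  have k0 : (ρ^2 - (X00+X11)*ρ + (X00*X11 - X01*X10)) * ξ0 = 0 := by
    linear_combination (X11 - ρ) * he0 - X01 * he1
  have k1 : (ρ^2 - (X00+X11)*ρ + (X00*X11 - X01*X10)) * ξ1 = 0 := by
    linear_combination (-X10) * he0 + (X00 - ρ) * he1
  rcases mul_eq_zero.mp k0 with h | h
  · exact h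
  rcases mul_eq_zero.mp k1 with h' | h'
  · exact h'
  · exact absurd ⟨h, h'⟩ hne

/-- eigenvalue bound by Frobenius norm -/
lemma eig_bound {X00 X01 X10 X11 ρ ξ0 ξ1 : ℝ} (hpos : 0 < ξ0^2 + ξ1^2)
    (he0 : X00*ξ0 + X01*ξ1 = ρ*ξ0) (he1 : X10*ξ0 + X11*ξ1 = ρ*ξ1) :
    ρ^2 ≤ X00^2 + X01^2 + X10^2 + X11^2 := by
  have key : ρ^2 * (ξ0^2 + ξ1^2) ≤ (X00^2 + X01^2 + X10^2 + X11^2) * (ξ0^2 + ξ1^2) := by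
    have e : ρ^2 * (ξ0^2+ξ1^2) = (X00*ξ0 + X01*ξ1)^2 + (X10*ξ0 + X11*ξ1)^2 := by
      linear_combination (-(X00*ξ0 + X01*ξ1 + ρ*ξ0)) * he0 + (-(X10*ξ0 + X11*ξ1 + ρ*ξ1)) * he1
    rw [e]
    nlinarith [sq_nonneg (X00*ξ1 - X01*ξ0), sq_nonneg (X10*ξ1 - X11*ξ0)]
  exact le_of_mul_le_mul_right (by linarith [key]) hpos

/-- two unit eigenvectors for the same eigenvalue of a nonscalar matrix are ± of each other -/
lemma eigvec_pm {X00 X01 X10 X11 ρ a0 a1 b0 b1 : ℝ}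
    (hns : X01 ≠ 0 ∨ X10 ≠ 0 ∨ X00 ≠ X11)
    (ha : a0^2 + a1^2 = 1) (hb : b0^2 + b1^2 = 1)
    (hea0 : X00*a0 + X01*a1 = ρ*a0) (hea1 : X10*a0 + X11*a1 = ρ*a1)
    (heb0 : X00*b0 + X01*b1 = ρ*b0) (heb1 : X10*b0 + X11*b1 = ρ*b1) :
    (b0 = a0 ∧ b1 = a1) ∨ (b0 = -a0 ∧ b1 = -a1) := by
  by_cases hD : a0*b1 - a1*b0 = 0
  · have hinner : (a0*b0 + a1*b1)^2 = 1 := by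
      have : (a0*b0 + a1*b1)^2 + (a0*b1 - a1*b0)^2 = (a0^2+a1^2)*(b0^2+b1^2) := by ring
      rw [hD] at this
      simp at this
      rw [this, ha, hb]; norm_num
    have : (a0*b0 + a1*b1 - 1) * (a0*b0 + a1*b1 + 1) = 0 := by linear_combination hinner
    rcases mul_eq_zero.mp this with h | h
    · left
      have h2 : (b0 - a0)^2 + (b1 - a1)^2 = 0 := by linear_combination ha + hb - 2*h - 2*hinner + 2*hinner
      constructor <;> nlinarith [sq_nonneg (b0-a0), sq_nonneg (b1-a1)]
    · right
      have h2 : (b0 + a0)^2 + (b1 + a1)^2 = 0 := by linear_combination ha + hb + 2*h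
      constructor <;> nlinarith [sq_nonneg (b0+a0), sq_nonneg (b1+a1)]
  · exfalso
    have r1 := cramer0 (p := X00 - ρ) (q := X01) (by linarith [hea0]) (by linarith [heb0]) hD
    have r2 := cramer0 (p := X10) (q := X11 - ρ) (by linarith [hea1]) (by linarith [heb1]) hD
    rcases hns with h | h | h
    · exact h r1.2
    · exact h r2.1
    · apply h; have := r1.1; have := r2.2; linarith

/-- among 5 reals that are roots of a common monic quadratic, three coincide -/
lemma triple_of_five (r : Fin 5 → ℝ) (τ δ : ℝ)
    (hroot : ∀ i, (r i)^2 - τ * (r i) + δ = 0) :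
    ∃ i j k : Fin 5, i ≠ j ∧ i ≠ k ∧ j ≠ k ∧ r i = r j ∧ r i = r k := by
  have pair : ∀ i j k : Fin 5, r i = r j ∨ r i = r k ∨ r j = r k := by
    intro i j k
    by_contra hc
    push_neg at hc
    obtain ⟨h1, h2, h3⟩ := hc
    have e1 : (r i - r j) * (r i + r j - τ) = 0 := by
      linear_combination hroot i - hroot j
    have e2 : (r i - r k) * (r i + r k - τ) = 0 := by
      linear_combination hroot i - hroot k
    have f1 : r i + r j = τ := by
      rcases mul_eq_zero.mp e1 with h | h
      · exact absurd (by linarith) h1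
      · linarith
    have f2 : r i + r k = τ := by
      rcases mul_eq_zero.mp e2 with h | h
      · exact absurd (by linarith) h2
      · linarith
    exact h3 (by linarith)
  -- now case bash
  by_cases h01 : r 0 = r 1
  · rcases pair 0 2 3 with h | h | h
    · exact ⟨0, 1, 2, by decide, by decide, by decide, h01, h⟩
    · exact ⟨0, 1, 3, by decide, by decide, by decide, h01, h⟩
    · rcases pair 0 2 4 with h' | h' | h'
      · exact ⟨0, 1, 2, by decide, by decide, by decide, h01, h'⟩
      · exact ⟨0, 1, 4, by decide, by decide, by decide, h01, h'⟩
      · exact ⟨2, 3, 4, by decide, by decide, by decide, h, h'⟩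
  · rcases pair 0 1 2 with h | h | h
    · exact absurd h h01
    · -- r 0 = r 2
      rcases pair 0 1 3 with h' | h' | h'
      · exact absurd h' h01
      · exact ⟨0, 2, 3, by decide, by decide, by decide, h, h'⟩
      · -- r 1 = r 3
        rcases pair 0 1 4 with h'' | h'' | h''
        · exact absurd h'' h01
        · exact ⟨0, 2, 4, by decide, by decide, by decide, h, h''⟩
        · exact ⟨1, 3, 4, by decide, by decide, by decide, h', h''⟩
    · -- r 1 = r 2
      rcases pair 0 1 3 with h' | h' | h'
      · exact absurd h' h01
      · -- r 0 = r 3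
        rcases pair 0 1 4 with h'' | h'' | h''
        · exact absurd h'' h01
        · exact ⟨0, 3, 4, by decide, by decide, by decide, h', h''⟩
        · exact ⟨1, 2, 4, by decide, by decide, by decide, h, h''⟩
      · -- r 1 = r 3
        exact ⟨1, 2, 3, by decide, by decide, by decide, h, h'⟩

end Tool

open Matrix
noncomputable section

lemma mulVec2 (Q : Matrix (Fin 2) (Fin 2) ℝ) (ζ : Fin 2 → ℝ) (i : Fin 2) :
    (Q *ᵥ ζ) i = Q i 0 * ζ 0 + Q i 1 * ζ 1 := by
  simp [mulVec, dotProduct, Fin.sum_univ_two]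

lemma orth_entries {Q : Matrix (Fin 2) (Fin 2) ℝ} (hQ : Qᵀ * Q = 1) :
    Q 0 0^2 + Q 1 0^2 = 1 ∧ Q 0 1^2 + Q 1 1^2 = 1 ∧ Q 0 0*Q 0 1 + Q 1 0*Q 1 1 = 0 := by
  have h00 := congrFun (congrFun hQ 0) 0
  have h01 := congrFun (congrFun hQ 0) 1
  have h11 := congrFun (congrFun hQ 1) 1
  simp [Matrix.mul_apply, Fin.sum_univ_two, Matrix.one_apply] at h00 h01 h11
  refine ⟨by nlinarith [h00], by nlinarith [h11], by nlinarith [h01]⟩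

lemma blk_add (X X' : Matrix (Fin 2) (Fin 2) ℝ) (u u' v v' : Fin 2 → ℝ) (a a' : ℝ) :
    blk X u v a + blk X' u' v' a' = blk (X + X') (u + u') (v + v') (a + a') := by
  ext i j
  fin_cases i <;> fin_cases j <;>
    simp [Matrix.add_apply]

lemma blk_decomp (B : Matrix (Fin 3) (Fin 3) ℝ) :
    B = blk !![B 0 0, B 0 1; B 1 0, B 1 1] ![B 0 2, B 1 2] ![B 2 0, B 2 1] (B 2 2) := by
  ext i j
  fin_cases i <;> fin_cases j <;> simp

lemma mem_self (X : Matrix (Fin 2) (Fin 2) ℝ) (w : Fin 2 → ℝ) (c : ℝ) :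
    c ∈ sigmaL (blk X 0 w c) := by
  rw [mem_sigmaL_iff]
  refine ⟨fun _ => 0, 0, le_refl 0, Or.inl ⟨rfl, by unfold SQ; norm_num⟩, by simp, by simp, by simp⟩

lemma shift_bound {X00 X01 X10 X11 u0 u1 ξ0 ξ1 s : ℝ} (hSQ : ξ0^2+ξ1^2 = 1)
    (he0 : X00*ξ0 + X01*ξ1 + u0 = s*ξ0) (he1 : X10*ξ0 + X11*ξ1 + u1 = s*ξ1) :
    s^2 ≤ 3*(X00^2+X01^2+X10^2+X11^2+u0^2+u1^2) := by
  have hb0 : ξ0^2 ≤ 1 := by nlinarith [sq_nonneg ξ1]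
  have hb1 : ξ1^2 ≤ 1 := by nlinarith [sq_nonneg ξ0]
  have e : s^2 = (X00*ξ0 + X01*ξ1 + u0)^2 + (X10*ξ0 + X11*ξ1 + u1)^2 := by
    rw [he0, he1]; nlinarith [hSQ]
  have c1 := sq3 (X00*ξ0) (X01*ξ1) u0
  have c2 := sq3 (X10*ξ0) (X11*ξ1) u1
  have b1 : X00^2*ξ0^2 ≤ X00^2 := by nlinarith [sq_nonneg X00]
  have b2 : X01^2*ξ1^2 ≤ X01^2 := by nlinarith [sq_nonneg X01]
  have b3 : X10^2*ξ0^2 ≤ X10^2 := by nlinarith [sq_nonneg X10]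
  have b4 : X11^2*ξ1^2 ≤ X11^2 := by nlinarith [sq_nonneg X11]
  nlinarith [c1, c2]

/-- the matrix `Q` transports: `Q *ᵥ (Qᵀ *ᵥ z) = z` -/
lemma QQT {Q : Matrix (Fin 2) (Fin 2) ℝ} (hQ : Qᵀ * Q = 1) (z : Fin 2 → ℝ) :
    Q *ᵥ (Qᵀ *ᵥ z) = z := by
  rw [Matrix.mulVec_mulVec, mul_eq_one_comm.mp hQ, Matrix.one_mulVec]

open Matrix
noncomputable section

set_option maxHeartbeats 2000000 in
/-- Step 1: the (2,2) entry and the upper-right column of the image vanish -/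
lemma step1 {Q : Matrix (Fin 2) (Fin 2) ℝ} (hQ : Qᵀ * Q = 1)
    (Bm : Matrix (Fin 2) (Fin 2) ℝ) (uB vB : Fin 2 → ℝ) (bB : ℝ)
    (At : Matrix (Fin 2) (Fin 2) ℝ)
    (key : ∀ (w : Fin 2 → ℝ) (c : ℝ),
      sigmaL (blk Bm uB (vB + Q *ᵥ w) (bB + c)) = sigmaL (blk At 0 w c)) :
    bB = 0 ∧ uB = 0 := by
  have probe : ∀ (v' : Fin 2 → ℝ) (c : ℝ),
      c ∈ sigmaL (blk Bm uB v' (bB + c)) := by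
    intro v' c
    have hv : vB + Q *ᵥ (Qᵀ *ᵥ (v' - vB)) = v' := by
      rw [QQT hQ]; abel
    have hm := mem_self At (Qᵀ *ᵥ (v' - vB)) c
    rw [← key (Qᵀ *ᵥ (v' - vB)) c, hv] at hm
    exact hm
  -- general consequence of a probe for v' with SQ v' ≤ 1 and suitable large c
  obtain ⟨Fr, hFr⟩ : ∃ r : ℝ, r = Bm 0 0^2 + Bm 0 1^2 + Bm 1 0^2 + Bm 1 1^2 := ⟨_, rfl⟩
  obtain ⟨K, hK⟩ : ∃ r : ℝ, r = 3*(Fr + uB 0^2 + uB 1^2) := ⟨_, rfl⟩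
  have hFr0 : 0 ≤ Fr := by rw [hFr]; positivity
  have hK0 : 0 ≤ K := by rw [hK]; nlinarith [hFr0, sq_nonneg (uB 0), sq_nonneg (uB 1)]
  have main : ∀ (v' : Fin 2 → ℝ) (c : ℝ), v' 0^2 + v' 1^2 ≤ 1 → bB + K + 2 ≤ c →
      ∃ ξ0 ξ1 : ℝ,
        (Bm 0 0 * ξ0 + Bm 0 1 * ξ1 + uB 0 = c * ξ0) ∧
        (Bm 1 0 * ξ0 + Bm 1 1 * ξ1 + uB 1 = c * ξ1) ∧
        v' 0 * ξ0 + v' 1 * ξ1 + bB = 0 := by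
    intro v' c hv hc
    have h := (mem_sigmaL_iff Bm uB v' (bB + c) c).mp (probe v' c)
    obtain ⟨ξ, t, ht, hd, he0, he1, hl⟩ := h
    have hteq : t = v' 0 * ξ 0 + v' 1 * ξ 1 + bB := by linarith [hl]
    rcases hd with ⟨ht0, _⟩ | hsq
    · refine ⟨ξ 0, ξ 1, ?_, ?_, ?_⟩
      · rw [ht0] at he0; linear_combination he0
      · rw [ht0] at he1; linear_combination he1
      · rw [ht0] at hteq; linarith [hteq]
    · exfalso
      -- boundary case excluded
      have hb := shift_bound (X00 := Bm 0 0) (X01 := Bm 0 1) (X10 := Bm 1 0) (X11 := Bm 1 1)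
        (u0 := uB 0) (u1 := uB 1) (ξ0 := ξ 0) (ξ1 := ξ 1) (s := c - t) hsq he0 he1
      -- (v'⬝ξ)^2 ≤ 1
      have hs' : ξ 0^2 + ξ 1^2 = 1 := hsq
      have hcs : (v' 0 * ξ 0 + v' 1 * ξ 1)^2 ≤ 1 := by
        nlinarith [sq_nonneg (v' 0 * ξ 1 - v' 1 * ξ 0), hv, hs', sq_nonneg (v' 0), sq_nonneg (v' 1)]
      have htb : t ≤ bB + 1 := by
        nlinarith [hcs, hteq, sq_nonneg (v' 0 * ξ 0 + v' 1 * ξ 1 - 1)]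
      have hct : K + 1 ≤ c - t := by linarith
      have hbK : (c - t)^2 ≤ K := by rw [hK, hFr]; linarith [hb]
      have hsq2 : (K+1)^2 ≤ (c-t)^2 := by
        have h0 : (0:ℝ) ≤ K + 1 := by linarith
        exact pow_le_pow_left₀ h0 hct 2
      nlinarith [hsq2, hbK, hK0]
  -- first: bB = 0, with v' = 0
  have hbB : bB = 0 := by
    obtain ⟨ξ0, ξ1, _, _, h3⟩ := main 0 (bB + K + 2) (by simp) (le_refl _)
    simpa using h3
  -- now u = 0
  have h1 := main ![1, 0] (bB + K + 2) (by norm_num [Matrix.cons_val_zero, Matrix.cons_val_one, Matrix.head_cons]) (le_refl _)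
  have h2 := main ![0, 1] (bB + K + 2) (by norm_num [Matrix.cons_val_zero, Matrix.cons_val_one, Matrix.head_cons]) (le_refl _)
  obtain ⟨a0, a1, ha0, ha1, ha2⟩ := h1
  obtain ⟨b0, b1, hb0, hb1, hb2⟩ := h2
  obtain ⟨c, hc⟩ : ∃ r : ℝ, r = bB + K + 2 := ⟨_, rfl⟩
  rw [← hc] at ha0 ha1 hb0 hb1
  have hcpos : K + 2 ≤ c := by rw [hc, hbB]; linarith
  have hFrK : Fr ≤ K := by
    have h9 : 0 ≤ uB 0^2 + uB 1^2 := by positivity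
    rw [hK]; linarith [hFr0]
  have hc2 : Fr < c^2 := by nlinarith [hcpos, hFrK, hK0, sq_nonneg (c-1)]
  -- uniqueness of solution
  have heq : a0 = b0 ∧ a1 = b1 := by
    by_contra hne
    have hnz : ¬((a0 - b0) = 0 ∧ (a1 - b1) = 0) := by
      intro ⟨x, y⟩; exact hne ⟨by linarith, by linarith⟩
    have hpos : 0 < (a0-b0)^2 + (a1-b1)^2 := by
      rcases not_and_or.mp hnz with h | h
      · have := sq_pos_of_ne_zero h; nlinarith [sq_nonneg (a1-b1)]
      · have := sq_pos_of_ne_zero h; nlinarith [sq_nonneg (a0-b0)]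
    have hbd := eig_bound (X00 := Bm 0 0) (X01 := Bm 0 1) (X10 := Bm 1 0) (X11 := Bm 1 1)
      (ρ := c) (ξ0 := a0 - b0) (ξ1 := a1 - b1) hpos
      (by linarith [ha0, hb0]) (by linarith [ha1, hb1])
    rw [← hFr] at hbd
    linarith [hbd, hc2]
  -- v' components
  have hA : a0 = 0 := by
    have : (1:ℝ) * a0 + 0 * a1 + bB = 0 := by simpa using ha2
    rw [hbB] at this; linarith
  have hB1 : b1 = 0 := by
    have : (0:ℝ) * b0 + 1 * b1 + bB = 0 := by simpa using hb2
    rw [hbB] at this; linarith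
  have ha1z : a1 = 0 := by rw [heq.2]; exact hB1
  have hu0 : uB 0 = 0 := by rw [hA, ha1z] at ha0; simpa using ha0
  have hu1 : uB 1 = 0 := by rw [hA, ha1z] at ha1; simpa using ha1
  refine ⟨hbB, ?_⟩
  funext i
  fin_cases i
  · exact hu0
  · exact hu1

open Matrix
noncomputable section

/-- two unit 2-vectors with zero determinant are equal up to sign -/
lemma pm_of_det_zero {a0 a1 b0 b1 : ℝ} (ha : a0^2 + a1^2 = 1) (hb : b0^2 + b1^2 = 1)
    (hD : a0*b1 - a1*b0 = 0) :
    (b0 = a0 ∧ b1 = a1) ∨ (b0 = -a0 ∧ b1 = -a1) := by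
  have hinner : (a0*b0 + a1*b1)^2 = 1 := by
    have h : (a0*b0 + a1*b1)^2 + (a0*b1 - a1*b0)^2 = (a0^2+a1^2)*(b0^2+b1^2) := by ring
    rw [hD] at h
    simp at h
    rw [h, ha, hb]; norm_num
  have : (a0*b0 + a1*b1 - 1) * (a0*b0 + a1*b1 + 1) = 0 := by linear_combination hinner
  rcases mul_eq_zero.mp this with h | h
  · left
    have h2 : (b0 - a0)^2 + (b1 - a1)^2 = 0 := by linear_combination ha + hb - 2*h - 2*hinner + 2*hinner
    constructor <;> nlinarith [sq_nonneg (b0-a0), sq_nonneg (b1-a1)]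
  · right
    have h2 : (b0 + a0)^2 + (b1 + a1)^2 = 0 := by linear_combination ha + hb + 2*h
    constructor <;> nlinarith [sq_nonneg (b0+a0), sq_nonneg (b1+a1)]

/-- unit vectors are componentwise nonzero-pair -/
lemma unit_ne_zero {a0 a1 : ℝ} (ha : a0^2 + a1^2 = 1) : ¬(a0 = 0 ∧ a1 = 0) := by
  rintro ⟨h0, h1⟩; rw [h0, h1] at ha; norm_num at ha

/-- Q preserves SQ -/
lemma SQ_Q {Q : Matrix (Fin 2) (Fin 2) ℝ} (hQ : Qᵀ * Q = 1) (z0 z1 : ℝ) :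
    (Q 0 0 * z0 + Q 0 1 * z1)^2 + (Q 1 0 * z0 + Q 1 1 * z1)^2 = z0^2 + z1^2 := by
  obtain ⟨h1, h2, h3⟩ := orth_entries hQ
  linear_combination z0^2 * h1 + z1^2 * h2 + 2*z0*z1 * h3

lemma detQ_sq {Q : Matrix (Fin 2) (Fin 2) ℝ} (hQ : Qᵀ * Q = 1) :
    (Q 0 0 * Q 1 1 - Q 0 1 * Q 1 0)^2 = 1 := by
  obtain ⟨h1, h2, h3⟩ := orth_entries hQ
  have key : (Q 0 0*Q 1 1 - Q 0 1*Q 1 0)^2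
      = (Q 0 0^2+Q 1 0^2)*(Q 0 1^2+Q 1 1^2) - (Q 0 0*Q 0 1+Q 1 0*Q 1 1)^2 := by ring
  rw [key, h1, h2, h3]; norm_num

/-- the eigenstructure of a 2x2 matrix with two distinct eigenvalues -/
lemma eigstruct {X : Matrix (Fin 2) (Fin 2) ℝ} {μ1 μ2 : ℝ} {z10 z11 z20 z21 : ℝ}
    (hμ : μ1 ≠ μ2)
    (h1 : z10^2 + z11^2 = 1) (h2 : z20^2 + z21^2 = 1)
    (he10 : X 0 0 * z10 + X 0 1 * z11 = μ1 * z10) (he11 : X 1 0 * z10 + X 1 1 * z11 = μ1 * z11)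
    (he20 : X 0 0 * z20 + X 0 1 * z21 = μ2 * z20) (he21 : X 1 0 * z20 + X 1 1 * z21 = μ2 * z21)
    (hD : z10*z21 - z11*z20 ≠ 0)
    {ρ w0 w1 : ℝ} (hw : w0^2 + w1^2 = 1)
    (hew0 : X 0 0 * w0 + X 0 1 * w1 = ρ * w0) (hew1 : X 1 0 * w0 + X 1 1 * w1 = ρ * w1) :
    (ρ = μ1 ∧ ((w0 = z10 ∧ w1 = z11) ∨ (w0 = -z10 ∧ w1 = -z11))) ∨
    (ρ = μ2 ∧ ((w0 = z20 ∧ w1 = z21) ∨ (w0 = -z20 ∧ w1 = -z21))) := by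
  obtain ⟨α, β, hx0, hx1⟩ := expand2 hD w0 w1
  have c0 : (α*(μ1-ρ))*z10 + (β*(μ2-ρ))*z20 = 0 := by
    rw [hx0, hx1] at hew0
    linear_combination hew0 - α * he10 - β * he20
  have c1 : (α*(μ1-ρ))*z11 + (β*(μ2-ρ))*z21 = 0 := by
    rw [hx0, hx1] at hew1
    linear_combination hew1 - α * he11 - β * he21
  obtain ⟨hα, hβ⟩ := cramer0 c0 c1 (by intro h; exact hD (by linarith))
  by_cases hρ1 : ρ = μ1
  · left
    refine ⟨hρ1, ?_⟩
    have hβ0 : β = 0 := by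
      rcases mul_eq_zero.mp hβ with h | h
      · exact h
      · exfalso; apply hμ; rw [hρ1] at h; linarith
    rw [hβ0] at hx0 hx1
    have hα2 : α^2 = 1 := by
      have : α^2 * (z10^2 + z11^2) = 1 := by rw [← hw, hx0, hx1]; ring
      rw [h1] at this; linarith
    have : (α - 1)*(α+1) = 0 := by linear_combination hα2
    rcases mul_eq_zero.mp this with h | h
    · left; have hα1 : α = 1 := by linarith
      rw [hα1] at hx0 hx1; constructor <;> linarith
    · right; have hα1 : α = -1 := by linarith
      rw [hα1] at hx0 hx1; constructor <;> linarith
  · right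
    have hα0 : α = 0 := by
      rcases mul_eq_zero.mp hα with h | h
      · exact h
      · exfalso; apply hρ1; linarith
    have hβ0 : μ2 - ρ = 0 ∨ β = 0 := by
      rcases mul_eq_zero.mp hβ with h | h
      · right; exact h
      · left; exact h
    have hρ2 : ρ = μ2 := by
      rcases hβ0 with h | h
      · linarith
      · exfalso
        rw [hα0, h] at hx0 hx1
        simp at hx0 hx1
        exact unit_ne_zero hw ⟨hx0, hx1⟩
    refine ⟨hρ2, ?_⟩
    rw [hα0] at hx0 hx1
    have hβ2 : β^2 = 1 := by
      have : β^2 * (z20^2 + z21^2) = 1 := by rw [← hw, hx0, hx1]; ring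
      rw [h2] at this; linarith
    have : (β - 1)*(β+1) = 0 := by linear_combination hβ2
    rcases mul_eq_zero.mp this with h | h
    · left; have hβ1 : β = 1 := by linarith
      rw [hβ1] at hx0 hx1; constructor <;> linarith
    · right; have hβ1 : β = -1 := by linarith
      rw [hβ1] at hx0 hx1; constructor <;> linarith

/-- boundary membership in the Lorentz spectrum of `blk X 0 w c` -/
lemma mem_bd (X : Matrix (Fin 2) (Fin 2) ℝ) (w : Fin 2 → ℝ) (c μ : ℝ) (ζ : Fin 2 → ℝ)
    (hζ : SQ ζ = 1)
    (he0 : X 0 0 * ζ 0 + X 0 1 * ζ 1 = μ * ζ 0) (he1 : X 1 0 * ζ 0 + X 1 1 * ζ 1 = μ * ζ 1)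
    (hts : μ ≤ w 0 * ζ 0 + w 1 * ζ 1 + c) :
    (μ + (w 0 * ζ 0 + w 1 * ζ 1) + c)/2 ∈ sigmaL (blk X 0 w c) := by
  rw [mem_sigmaL_iff]
  refine ⟨ζ, (w 0 * ζ 0 + w 1 * ζ 1 + c - μ)/2, by linarith, Or.inr hζ, ?_, ?_, by ring⟩
  · have : (μ + (w 0 * ζ 0 + w 1 * ζ 1) + c)/2 - (w 0 * ζ 0 + w 1 * ζ 1 + c - μ)/2 = μ := by ring
    rw [this]; simpa using he0
  · have : (μ + (w 0 * ζ 0 + w 1 * ζ 1) + c)/2 - (w 0 * ζ 0 + w 1 * ζ 1 + c - μ)/2 = μ := by ring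
    rw [this]; simpa using he1

/-- extraction of a boundary eigenpair from a large Lorentz eigenvalue -/
lemma extract {X : Matrix (Fin 2) (Fin 2) ℝ} {y : Fin 2 → ℝ} {c lam : ℝ}
    (hmem : lam ∈ sigmaL (blk X 0 y c)) (hne : lam ≠ c)
    (hbig : X 0 0^2 + X 0 1^2 + X 1 0^2 + X 1 1^2 < lam^2) :
    ∃ ξ0 ξ1 t : ℝ, 0 ≤ t ∧ ξ0^2 + ξ1^2 = 1 ∧
      (X 0 0 * ξ0 + X 0 1 * ξ1 = (lam - t) * ξ0) ∧
      (X 1 0 * ξ0 + X 1 1 * ξ1 = (lam - t) * ξ1) ∧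
      lam + t = y 0 * ξ0 + y 1 * ξ1 + c := by
  obtain ⟨ξ, t, ht, hd, he0, he1, hl⟩ := (mem_sigmaL_iff X 0 y c lam).mp hmem
  simp only [Pi.zero_apply, add_zero] at he0 he1
  rcases hd with ⟨ht0, hlt⟩ | hsq
  · exfalso
    by_cases hz : ξ 0 = 0 ∧ ξ 1 = 0
    · apply hne
      rw [ht0, hz.1, hz.2] at hl
      simpa using hl
    · have hpos : 0 < ξ 0^2 + ξ 1^2 := by
        rcases not_and_or.mp hz with h | h
        · nlinarith [sq_pos_of_ne_zero h, sq_nonneg (ξ 1)]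
        · nlinarith [sq_pos_of_ne_zero h, sq_nonneg (ξ 0)]
      rw [ht0] at he0 he1
      have hbd := eig_bound (X00 := X 0 0) (X01 := X 0 1) (X10 := X 1 0) (X11 := X 1 1)
        (ρ := lam) hpos (by linear_combination he0) (by linear_combination he1)
      linarith
  · exact ⟨ξ 0, ξ 1, t, ht, hsq, he0, he1, hl⟩

/-- two matrices agreeing on a basis are equal -/
lemma mat_eq_of_basis (M N : Matrix (Fin 2) (Fin 2) ℝ) (a0 a1 b0 b1 : ℝ)
    (hD : a0*b1 - a1*b0 ≠ 0)
    (hMa0 : M 0 0 * a0 + M 0 1 * a1 = N 0 0 * a0 + N 0 1 * a1)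
    (hMa1 : M 1 0 * a0 + M 1 1 * a1 = N 1 0 * a0 + N 1 1 * a1)
    (hMb0 : M 0 0 * b0 + M 0 1 * b1 = N 0 0 * b0 + N 0 1 * b1)
    (hMb1 : M 1 0 * b0 + M 1 1 * b1 = N 1 0 * b0 + N 1 1 * b1) : M = N := by
  have r0 := cramer0 (p := M 0 0 - N 0 0) (q := M 0 1 - N 0 1)
    (by linarith [hMa0]) (by linarith [hMb0]) hD
  have r1 := cramer0 (p := M 1 0 - N 1 0) (q := M 1 1 - N 1 1)
    (by linarith [hMa1]) (by linarith [hMb1]) hD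
  ext i j
  fin_cases i <;> fin_cases j
  · show M 0 0 = N 0 0; linarith [r0.1]
  · show M 0 1 = N 0 1; linarith [r0.2]
  · show M 1 0 = N 1 0; linarith [r1.1]
  · show M 1 1 = N 1 1; linarith [r1.2]

/-- existence of an eigenvector for a root of the characteristic polynomial -/
lemma eigvec_exists (X : Matrix (Fin 2) (Fin 2) ℝ) (μ : ℝ)
    (hdet : (X 0 0 - μ)*(X 1 1 - μ) - X 0 1*X 1 0 = 0) :
    ∃ z0 z1 : ℝ, ¬(z0 = 0 ∧ z1 = 0) ∧
      (X 0 0 * z0 + X 0 1 * z1 = μ * z0) ∧ (X 1 0 * z0 + X 1 1 * z1 = μ * z1) := by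
  by_cases hq : X 0 1 ≠ 0
  · refine ⟨X 0 1, μ - X 0 0, fun h => hq h.1, by ring, by linear_combination -hdet⟩
  · push_neg at hq
    by_cases hS : X 1 1 = μ
    · refine ⟨0, 1, by simp, by simp [hq, hS], by simp [hS]⟩
    · have hX00 : X 0 0 = μ := by
        rcases mul_eq_zero.mp (by rw [hq] at hdet; linear_combination hdet :
          (X 0 0 - μ)*(X 1 1 - μ) = 0) with h | h
        · linarith
        · exact absurd (by linarith) hS
      refine ⟨X 1 1 - μ, -X 1 0, ?_, by rw [hq, hX00]; ring, by ring⟩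
      intro h
      exact hS (by linarith [h.1])

/-- normalized eigendata from a positive discriminant -/
lemma eigdata (X : Matrix (Fin 2) (Fin 2) ℝ)
    (hdisc : 0 < (X 0 0 - X 1 1)^2 + 4*(X 0 1*X 1 0)) :
    ∃ (μ1 μ2 : ℝ) (ζ1 ζ2 : Fin 2 → ℝ), μ1 ≠ μ2 ∧ SQ ζ1 = 1 ∧ SQ ζ2 = 1 ∧
      (X 0 0 * ζ1 0 + X 0 1 * ζ1 1 = μ1 * ζ1 0) ∧ (X 1 0 * ζ1 0 + X 1 1 * ζ1 1 = μ1 * ζ1 1) ∧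
      (X 0 0 * ζ2 0 + X 0 1 * ζ2 1 = μ2 * ζ2 0) ∧ (X 1 0 * ζ2 0 + X 1 1 * ζ2 1 = μ2 * ζ2 1) := by
  obtain ⟨e, he, hesq⟩ : ∃ e : ℝ, 0 < e ∧ e^2 = (X 0 0 - X 1 1)^2 + 4*(X 0 1*X 1 0) :=
    ⟨Real.sqrt _, Real.sqrt_pos.mpr hdisc, Real.sq_sqrt (le_of_lt hdisc)⟩
  have norm : ∀ z0 z1 : ℝ, ∀ μ : ℝ, ¬(z0 = 0 ∧ z1 = 0) →
      (X 0 0 * z0 + X 0 1 * z1 = μ * z0) → (X 1 0 * z0 + X 1 1 * z1 = μ * z1) →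
      ∃ ζ : Fin 2 → ℝ, SQ ζ = 1 ∧
        (X 0 0 * ζ 0 + X 0 1 * ζ 1 = μ * ζ 0) ∧ (X 1 0 * ζ 0 + X 1 1 * ζ 1 = μ * ζ 1) := by
    intro z0 z1 μ hz h0 h1
    have hpos : 0 < z0^2 + z1^2 := by
      rcases not_and_or.mp hz with h | h
      · nlinarith [sq_pos_of_ne_zero h, sq_nonneg z1]
      · nlinarith [sq_pos_of_ne_zero h, sq_nonneg z0]
    obtain ⟨ν, hν, hνsq⟩ : ∃ ν : ℝ, 0 < ν ∧ ν^2 = z0^2 + z1^2 :=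
      ⟨Real.sqrt _, Real.sqrt_pos.mpr hpos, Real.sq_sqrt (le_of_lt hpos)⟩
    refine ⟨![z0/ν, z1/ν], ?_, ?_, ?_⟩
    · show (z0/ν)^2 + (z1/ν)^2 = 1
      field_simp
      linarith [hνsq]
    · show X 0 0 * (z0/ν) + X 0 1 * (z1/ν) = μ * (z0/ν)
      field_simp
      linear_combination h0
    · show X 1 0 * (z0/ν) + X 1 1 * (z1/ν) = μ * (z1/ν)
      field_simp
      linear_combination h1
  set τ := X 0 0 + X 1 1 with hτ
  have hdet1 : (X 0 0 - (τ+e)/2)*(X 1 1 - (τ+e)/2) - X 0 1*X 1 0 = 0 := by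
    rw [hτ]; linear_combination (1/4 : ℝ) * hesq
  have hdet2 : (X 0 0 - (τ-e)/2)*(X 1 1 - (τ-e)/2) - X 0 1*X 1 0 = 0 := by
    rw [hτ]; linear_combination (1/4 : ℝ) * hesq
  obtain ⟨z10, z11, hz1, h10, h11⟩ := eigvec_exists X ((τ+e)/2) hdet1
  obtain ⟨z20, z21, hz2, h20, h21⟩ := eigvec_exists X ((τ-e)/2) hdet2
  obtain ⟨ζ1, hζ1, hζ10, hζ11⟩ := norm z10 z11 _ hz1 h10 h11
  obtain ⟨ζ2, hζ2, hζ20, hζ21⟩ := norm z20 z21 _ hz2 h20 h21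
  exact ⟨(τ+e)/2, (τ-e)/2, ζ1, ζ2, by intro h; nlinarith [he], hζ1, hζ2, hζ10, hζ11, hζ20, hζ21⟩

open Matrix
noncomputable section

set_option maxHeartbeats 2000000 in
/-- the image block `Bm` is not a scalar matrix -/
lemma nonscalar_Bm {Q : Matrix (Fin 2) (Fin 2) ℝ} (hQ : Qᵀ * Q = 1)
    (Bm : Matrix (Fin 2) (Fin 2) ℝ) (vB : Fin 2 → ℝ)
    (At : Matrix (Fin 2) (Fin 2) ℝ) {μ1 μ2 : ℝ} {ζ1 ζ2 : Fin 2 → ℝ}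
    (hμ : μ1 ≠ μ2) (hζ1 : SQ ζ1 = 1) (hζ2 : SQ ζ2 = 1)
    (he10 : At 0 0 * ζ1 0 + At 0 1 * ζ1 1 = μ1 * ζ1 0)
    (he11 : At 1 0 * ζ1 0 + At 1 1 * ζ1 1 = μ1 * ζ1 1)
    (he20 : At 0 0 * ζ2 0 + At 0 1 * ζ2 1 = μ2 * ζ2 0)
    (he21 : At 1 0 * ζ2 0 + At 1 1 * ζ2 1 = μ2 * ζ2 1)
    (hD : ζ1 0 * ζ2 1 - ζ1 1 * ζ2 0 ≠ 0)
    (key2 : ∀ (w : Fin 2 → ℝ) (c : ℝ),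
      sigmaL (blk Bm 0 (vB + Q *ᵥ w) c) = sigmaL (blk At 0 w c)) :
    Bm 0 1 ≠ 0 ∨ Bm 1 0 ≠ 0 ∨ Bm 0 0 ≠ Bm 1 1 := by
  by_contra hcon
  push_neg at hcon
  obtain ⟨hq, hr, hdiag⟩ := hcon
  obtain ⟨β, hβ⟩ : ∃ r : ℝ, r = Bm 0 0 := ⟨_, rfl⟩
  obtain ⟨FA, hFA⟩ : ∃ r : ℝ, r = At 0 0^2 + At 0 1^2 + At 1 0^2 + At 1 1^2 := ⟨_, rfl⟩
  have hFA0 : 0 ≤ FA := by rw [hFA]; positivity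
  obtain ⟨c, hc⟩ : ∃ r : ℝ, r = 2*FA + |β| + 7 := ⟨_, rfl⟩
  have hcβ : β + 2 ≤ c := by
    rw [hc]; have := le_abs_self β; have := abs_nonneg β; linarith
  have hcFA : 2*FA + 7 ≤ c + β := by
    rw [hc]; have := neg_abs_le β; linarith
  -- the probe
  obtain ⟨w₀, hw₀⟩ : ∃ w : Fin 2 → ℝ, w = Qᵀ *ᵥ (![1, 0] - vB) := ⟨_, rfl⟩
  have hv : vB + Q *ᵥ w₀ = ![1, 0] := by rw [hw₀, QQT hQ]; abel
  -- the five values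
  have hval : ∀ k : Fin 5, ∃ x ∈ ({μ1 + (w₀ 0 * ζ1 0 + w₀ 1 * ζ1 1),
      μ1 - (w₀ 0 * ζ1 0 + w₀ 1 * ζ1 1), μ2 + (w₀ 0 * ζ2 0 + w₀ 1 * ζ2 1),
      μ2 - (w₀ 0 * ζ2 0 + w₀ 1 * ζ2 1)} : Finset ℝ), β + (k.val : ℝ)/5 = x := by
    intro k
    obtain ⟨rk, hrk⟩ : ∃ r : ℝ, r = (k.val : ℝ)/5 := ⟨_, rfl⟩
    have hrk0 : 0 ≤ rk := by rw [hrk]; positivity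
    have hrk1 : rk ≤ 1 := by
      rw [hrk]
      have : (k.val : ℝ) ≤ 4 := by exact_mod_cast Nat.lt_succ_iff.mp k.isLt
      linarith
    obtain ⟨g, hg0, hgsq⟩ : ∃ g : ℝ, 0 ≤ g ∧ g^2 = 1 - rk^2 :=
      ⟨Real.sqrt _, Real.sqrt_nonneg _, Real.sq_sqrt (by nlinarith)⟩
    obtain ⟨lam, hlam⟩ : ∃ r : ℝ, r = (β + rk + c)/2 := ⟨_, rfl⟩
    -- membership on the B side
    have hmemB : lam ∈ sigmaL (blk Bm 0 (vB + Q *ᵥ w₀) c) := by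
      rw [hv, mem_sigmaL_iff]
      refine ⟨![rk, g], lam - β, ?_, Or.inr ?_, ?_, ?_, ?_⟩
      · rw [hlam]; linarith
      · show rk^2 + g^2 = 1; linarith [hgsq]
      · show Bm 0 0 * rk + Bm 0 1 * g + (0 : Fin 2 → ℝ) 0 = (lam - (lam - β)) * rk
        simp only [Pi.zero_apply, add_zero]
        linear_combination g * hq - rk * hβ
      · show Bm 1 0 * rk + Bm 1 1 * g + (0 : Fin 2 → ℝ) 1 = (lam - (lam - β)) * g
        simp only [Pi.zero_apply, add_zero]
        linear_combination rk * hr - g * hβ - g * hdiag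
      · show lam + (lam - β) = ![(1:ℝ), 0] 0 * rk + ![(1:ℝ), 0] 1 * g + c
        simp only [Matrix.cons_val_zero, Matrix.cons_val_one, Matrix.head_cons, one_mul,
          zero_mul, add_zero]
        linear_combination 2 * hlam
    rw [key2 w₀ c] at hmemB
    have hlamc : (β + c)/2 ≤ lam := by rw [hlam]; linarith
    have hlam3 : FA + 3 ≤ lam := by linarith
    have hbig : At 0 0^2 + At 0 1^2 + At 1 0^2 + At 1 1^2 < lam^2 := by
      rw [← hFA]; nlinarith [hFA0]
    have hne : lam ≠ c := by
      intro h
      rw [h] at hlam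
      have : c = β + rk := by linarith
      linarith
    obtain ⟨ξ0, ξ1, t, ht, hSQξ, heig0, heig1, hlast⟩ := extract hmemB hne hbig
    have hstruct := eigstruct hμ hζ1 hζ2 he10 he11 he20 he21 hD hSQξ heig0 heig1
    have hvk : β + rk = (lam - t) + (w₀ 0 * ξ0 + w₀ 1 * ξ1) := by
      rw [hlam] at hlast ⊢; linarith
    rw [hrk] at hvk
    refine ⟨(lam - t) + (w₀ 0 * ξ0 + w₀ 1 * ξ1), ?_, hvk⟩
    simp only [Finset.mem_insert, Finset.mem_singleton]
    rcases hstruct with ⟨hρ, ⟨h0, h1⟩ | ⟨h0, h1⟩⟩ | ⟨hρ, ⟨h0, h1⟩ | ⟨h0, h1⟩⟩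
    · left; rw [hρ, h0, h1]
    · right; left; rw [hρ, h0, h1]; ring
    · right; right; left; rw [hρ, h0, h1]
    · right; right; right; rw [hρ, h0, h1]; ring
  -- pigeonhole
  choose fval hmem hfeq using hval
  have hcard : (({μ1 + (w₀ 0 * ζ1 0 + w₀ 1 * ζ1 1),
      μ1 - (w₀ 0 * ζ1 0 + w₀ 1 * ζ1 1), μ2 + (w₀ 0 * ζ2 0 + w₀ 1 * ζ2 1),
      μ2 - (w₀ 0 * ζ2 0 + w₀ 1 * ζ2 1)} : Finset ℝ)).card < (Finset.univ : Finset (Fin 5)).card := by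
    have h4 : (({μ1 + (w₀ 0 * ζ1 0 + w₀ 1 * ζ1 1),
        μ1 - (w₀ 0 * ζ1 0 + w₀ 1 * ζ1 1), μ2 + (w₀ 0 * ζ2 0 + w₀ 1 * ζ2 1),
        μ2 - (w₀ 0 * ζ2 0 + w₀ 1 * ζ2 1)} : Finset ℝ)).card ≤ 4 := by
      apply le_trans (Finset.card_insert_le _ _)
      have := Finset.card_insert_le (μ1 - (w₀ 0 * ζ1 0 + w₀ 1 * ζ1 1))
        ({μ2 + (w₀ 0 * ζ2 0 + w₀ 1 * ζ2 1), μ2 - (w₀ 0 * ζ2 0 + w₀ 1 * ζ2 1)} : Finset ℝ)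
      have := Finset.card_insert_le (μ2 + (w₀ 0 * ζ2 0 + w₀ 1 * ζ2 1))
        ({μ2 - (w₀ 0 * ζ2 0 + w₀ 1 * ζ2 1)} : Finset ℝ)
      simp only [Finset.card_singleton] at *
      omega
    simp only [Finset.card_univ, Fintype.card_fin]
    omega
  obtain ⟨x, _, y, _, hxy, hfxy⟩ :=
    Finset.exists_ne_map_eq_of_card_lt_of_maps_to hcard (fun k _ => hmem k)
  apply hxy
  have : β + (x.val : ℝ)/5 = β + (y.val : ℝ)/5 := by rw [hfeq x, hfeq y, hfxy]
  have hvv : (x.val : ℝ) = (y.val : ℝ) := by linarith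
  have : x.val = y.val := by exact_mod_cast hvv
  exact Fin.ext this

set_option maxHeartbeats 2000000 in
/-- a single eigen-probe: each unit eigenpair `(μ, ζ)` of `At` transports to `(μ - v⬝η, η)`
of `Bm`, with `η = Qζ`. -/
lemma probeone {Q : Matrix (Fin 2) (Fin 2) ℝ} (hQ : Qᵀ * Q = 1)
    (Bm : Matrix (Fin 2) (Fin 2) ℝ) (vB : Fin 2 → ℝ)
    (At : Matrix (Fin 2) (Fin 2) ℝ)
    (key2 : ∀ (w : Fin 2 → ℝ) (c : ℝ),
      sigmaL (blk Bm 0 (vB + Q *ᵥ w) c) = sigmaL (blk At 0 w c))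
    (hns : Bm 0 1 ≠ 0 ∨ Bm 1 0 ≠ 0 ∨ Bm 0 0 ≠ Bm 1 1)
    (μ ζ0 ζ1 : ℝ) (hSQ : ζ0^2 + ζ1^2 = 1)
    (he0 : At 0 0 * ζ0 + At 0 1 * ζ1 = μ * ζ0)
    (he1 : At 1 0 * ζ0 + At 1 1 * ζ1 = μ * ζ1) :
    ∃ ρ : ℝ,
      (Bm 0 0 * (Q 0 0 * ζ0 + Q 0 1 * ζ1) + Bm 0 1 * (Q 1 0 * ζ0 + Q 1 1 * ζ1)
        = ρ * (Q 0 0 * ζ0 + Q 0 1 * ζ1)) ∧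
      (Bm 1 0 * (Q 0 0 * ζ0 + Q 0 1 * ζ1) + Bm 1 1 * (Q 1 0 * ζ0 + Q 1 1 * ζ1)
        = ρ * (Q 1 0 * ζ0 + Q 1 1 * ζ1)) ∧
      ρ + (vB 0 * (Q 0 0 * ζ0 + Q 0 1 * ζ1) + vB 1 * (Q 1 0 * ζ0 + Q 1 1 * ζ1)) = μ := by
  obtain ⟨η0, hη0⟩ : ∃ r : ℝ, r = Q 0 0 * ζ0 + Q 0 1 * ζ1 := ⟨_, rfl⟩
  obtain ⟨η1, hη1⟩ : ∃ r : ℝ, r = Q 1 0 * ζ0 + Q 1 1 * ζ1 := ⟨_, rfl⟩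
  have hSQη : η0^2 + η1^2 = 1 := by rw [hη0, hη1, SQ_Q hQ]; exact hSQ
  obtain ⟨FB, hFB⟩ : ∃ r : ℝ, r = Bm 0 0^2 + Bm 0 1^2 + Bm 1 0^2 + Bm 1 1^2 := ⟨_, rfl⟩
  have hFB0 : 0 ≤ FB := by rw [hFB]; positivity
  obtain ⟨c, hc⟩ : ∃ r : ℝ, r = 2*FB + 3*|μ| + 20 := ⟨_, rfl⟩
  have hcμ1 : μ + 6 ≤ c := by
    rw [hc]; have := le_abs_self μ; have := abs_nonneg μ; linarith
  have hcμ2 : 2*FB + 20 ≤ c + μ := by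
    rw [hc]; have := neg_abs_le μ; have := abs_nonneg μ; linarith
  -- the five probes
  have H : ∀ k : Fin 5, ∃ ξ0 ξ1 t : ℝ, 0 ≤ t ∧ ξ0^2 + ξ1^2 = 1 ∧
      (Bm 0 0 * ξ0 + Bm 0 1 * ξ1 = ((μ + ((k.val:ℝ)+1) + c)/2 - t) * ξ0) ∧
      (Bm 1 0 * ξ0 + Bm 1 1 * ξ1 = ((μ + ((k.val:ℝ)+1) + c)/2 - t) * ξ1) ∧
      μ + ((k.val:ℝ)+1) = ((μ + ((k.val:ℝ)+1) + c)/2 - t)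
        + (vB 0 * ξ0 + vB 1 * ξ1) + ((k.val:ℝ)+1) * (η0 * ξ0 + η1 * ξ1) := by
    intro k
    obtain ⟨sk, hsk⟩ : ∃ r : ℝ, r = (k.val : ℝ) + 1 := ⟨_, rfl⟩
    have hsk1 : 1 ≤ sk := by
      rw [hsk]; have : (0:ℝ) ≤ (k.val:ℝ) := Nat.cast_nonneg _; linarith
    have hsk5 : sk ≤ 5 := by
      rw [hsk]
      have : (k.val : ℝ) ≤ 4 := by exact_mod_cast Nat.lt_succ_iff.mp k.isLt
      linarith
    -- RHS membership
    have hmemA := mem_bd At ![sk * ζ0, sk * ζ1] c μ ![ζ0, ζ1]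
      (by show ζ0^2 + ζ1^2 = 1; exact hSQ)
      (by simpa using he0) (by simpa using he1)
      (by
        show μ ≤ sk * ζ0 * ζ0 + sk * ζ1 * ζ1 + c
        have : sk * ζ0 * ζ0 + sk * ζ1 * ζ1 = sk * (ζ0^2 + ζ1^2) := by ring
        rw [this, hSQ]; linarith)
    have helt : (μ + (![sk * ζ0, sk * ζ1] 0 * ![ζ0, ζ1] 0
        + ![sk * ζ0, sk * ζ1] 1 * ![ζ0, ζ1] 1) + c)/2 = (μ + sk + c)/2 := by
      simp only [Matrix.cons_val_zero, Matrix.cons_val_one, Matrix.head_cons]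
      linear_combination (sk/2) * hSQ
    rw [helt] at hmemA
    rw [← key2 ![sk * ζ0, sk * ζ1] c] at hmemA
    -- extraction
    have hlamb : (μ + 1 + c)/2 ≤ (μ + sk + c)/2 := by linarith
    have hlam3 : FB + 3 ≤ (μ + sk + c)/2 := by linarith
    have hbig : Bm 0 0^2 + Bm 0 1^2 + Bm 1 0^2 + Bm 1 1^2 < ((μ + sk + c)/2)^2 := by
      rw [← hFB]; nlinarith [hFB0]
    have hne : (μ + sk + c)/2 ≠ c := by
      intro h
      have : μ + sk = c := by linarith
      linarith
    obtain ⟨ξ0, ξ1, t, ht, hSQξ, heig0, heig1, hlast⟩ := extract hmemA hne hbig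
    refine ⟨ξ0, ξ1, t, ht, hSQξ, ?_, ?_, ?_⟩
    · rw [← hsk]; exact heig0
    · rw [← hsk]; exact heig1
    · rw [← hsk]
      have hy0 : (vB + Q *ᵥ ![sk * ζ0, sk * ζ1]) 0 = vB 0 + sk * η0 := by
        rw [Pi.add_apply, mulVec2]
        simp only [Matrix.cons_val_zero, Matrix.cons_val_one, Matrix.head_cons]
        rw [hη0]; ring
      have hy1 : (vB + Q *ᵥ ![sk * ζ0, sk * ζ1]) 1 = vB 1 + sk * η1 := by
        rw [Pi.add_apply, mulVec2]
        simp only [Matrix.cons_val_zero, Matrix.cons_val_one, Matrix.head_cons]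
        rw [hη1]; ring
      rw [hy0, hy1] at hlast
      linear_combination hlast
  choose ξ0 ξ1 t ht hSQξ heig0 heig1 hE using H
  -- the eigenvalues are roots of the characteristic polynomial
  have hroot : ∀ k : Fin 5, ((μ + ((k.val:ℝ)+1) + c)/2 - t k)^2
      - (Bm 0 0 + Bm 1 1) * ((μ + ((k.val:ℝ)+1) + c)/2 - t k)
      + (Bm 0 0 * Bm 1 1 - Bm 0 1 * Bm 1 0) = 0 := by
    intro k
    exact eig_charpoly (unit_ne_zero (hSQξ k)) (heig0 k) (heig1 k)
  obtain ⟨i, j, k, hij, hik, hjk, hρij, hρik⟩ :=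
    triple_of_five (fun k => (μ + ((k.val:ℝ)+1) + c)/2 - t k) _ _ hroot
  -- find a pair with equal eigenvector
  have hpmj := eigvec_pm hns (hSQξ i) (hSQξ j) (heig0 i) (heig1 i)
    (by linear_combination heig0 j - ξ0 j * hρij) (by linear_combination heig1 j - ξ1 j * hρij)
  have hpmk := eigvec_pm hns (hSQξ i) (hSQξ k) (heig0 i) (heig1 i)
    (by linear_combination heig0 k - ξ0 k * hρik) (by linear_combination heig1 k - ξ1 k * hρik)
  -- get a pair (p, q), p ≠ q, with equal eigenvalue and equal eigenvector
  obtain ⟨p, q, hpq, hρpq, hxq0, hxq1⟩ :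
      ∃ p q : Fin 5, p ≠ q ∧
        ((μ + ((p.val:ℝ)+1) + c)/2 - t p) = ((μ + ((q.val:ℝ)+1) + c)/2 - t q) ∧
        ξ0 q = ξ0 p ∧ ξ1 q = ξ1 p := by
    rcases hpmj with ⟨h0, h1⟩ | ⟨h0, h1⟩
    · exact ⟨i, j, hij, hρij, h0, h1⟩
    · rcases hpmk with ⟨h0', h1'⟩ | ⟨h0', h1'⟩
      · exact ⟨i, k, hik, hρik, h0', h1'⟩
      · refine ⟨j, k, hjk, by rw [← hρij, ← hρik], ?_, ?_⟩
        · rw [h0, h0']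
        · rw [h1, h1']
  have hspq : ((p.val:ℝ)+1) ≠ ((q.val:ℝ)+1) := by
    intro h
    apply hpq
    have : (p.val : ℝ) = (q.val : ℝ) := by linarith
    exact Fin.ext (by exact_mod_cast this)
  have hEp := hE p
  have hEq := hE q
  rw [hxq0, hxq1] at hEq
  -- inner product is 1
  have hIp : η0 * ξ0 p + η1 * ξ1 p = 1 := by
    have hsub : (((p.val:ℝ)+1) - ((q.val:ℝ)+1)) * (η0 * ξ0 p + η1 * ξ1 p - 1) = 0 := by
      linear_combination -hEp + hEq - hρpq
    rcases mul_eq_zero.mp hsub with h | h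
    · exact absurd (by linarith) hspq
    · linarith
  have hzero : (ξ0 p - η0)^2 + (ξ1 p - η1)^2 = 0 := by
    linear_combination hSQξ p + hSQη - 2 * hIp
  have hx0 : ξ0 p = η0 := by nlinarith [sq_nonneg (ξ0 p - η0), sq_nonneg (ξ1 p - η1)]
  have hx1 : ξ1 p = η1 := by nlinarith [sq_nonneg (ξ0 p - η0), sq_nonneg (ξ1 p - η1)]
  refine ⟨(μ + ((p.val:ℝ)+1) + c)/2 - t p, ?_, ?_, ?_⟩
  · rw [← hη0, ← hη1]
    have := heig0 p
    rw [hx0, hx1] at this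
    exact this
  · rw [← hη0, ← hη1]
    have := heig1 p
    rw [hx0, hx1] at this
    exact this
  · rw [← hη0, ← hη1]
    rw [hx0, hx1] at hEp
    linear_combination -hEp - ((p.val:ℝ)+1) * hSQη

open Matrix
noncomputable section

set_option maxHeartbeats 1000000 in
theorem coreφ (φ : Matrix (Fin 3) (Fin 3) ℝ →ₗ[ℝ] Matrix (Fin 3) (Fin 3) ℝ)
    (hφ : ∀ A, sigmaL (φ A) = sigmaL A)
    (Q : Matrix (Fin 2) (Fin 2) ℝ) (hQ : Qᵀ * Q = 1)
    (hQφ : ∀ (v : Fin 2 → ℝ) (a : ℝ), φ (blk 0 0 v a) = blk 0 0 (Q *ᵥ v) a)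
    (At : Matrix (Fin 2) (Fin 2) ℝ) {μ1 μ2 : ℝ} {ζ1 ζ2 : Fin 2 → ℝ}
    (hμ : μ1 ≠ μ2) (hζ1 : SQ ζ1 = 1) (hζ2 : SQ ζ2 = 1)
    (he10 : At 0 0 * ζ1 0 + At 0 1 * ζ1 1 = μ1 * ζ1 0)
    (he11 : At 1 0 * ζ1 0 + At 1 1 * ζ1 1 = μ1 * ζ1 1)
    (he20 : At 0 0 * ζ2 0 + At 0 1 * ζ2 1 = μ2 * ζ2 0)
    (he21 : At 1 0 * ζ2 0 + At 1 1 * ζ2 1 = μ2 * ζ2 1) :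
    φ (blk At 0 0 0) = blk (Q * At * Qᵀ) 0 0 0 := by
  obtain ⟨B, hBdef⟩ : ∃ M, M = φ (blk At 0 0 0) := ⟨_, rfl⟩
  obtain ⟨Bm, hBm⟩ : ∃ M : Matrix (Fin 2) (Fin 2) ℝ, M = !![B 0 0, B 0 1; B 1 0, B 1 1] :=
    ⟨_, rfl⟩
  obtain ⟨uB, huBd⟩ : ∃ u : Fin 2 → ℝ, u = ![B 0 2, B 1 2] := ⟨_, rfl⟩
  obtain ⟨vB, hvBd⟩ : ∃ u : Fin 2 → ℝ, u = ![B 2 0, B 2 1] := ⟨_, rfl⟩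
  obtain ⟨bB, hbBd⟩ : ∃ r : ℝ, r = B 2 2 := ⟨_, rfl⟩
  have hB2 : B = blk Bm uB vB bB := by
    rw [hBm, huBd, hvBd, hbBd]; exact blk_decomp B
  have e1 : ∀ (w : Fin 2 → ℝ) (c : ℝ),
      φ (blk At 0 w c) = blk Bm uB (vB + Q *ᵥ w) (bB + c) := by
    intro w c
    have hsplit : blk At 0 w c = blk At 0 0 0 + blk 0 0 w c := by
      rw [blk_add]; norm_num
    rw [hsplit, map_add, hQφ w c, ← hBdef, hB2, blk_add, add_zero, add_zero]
  have key : ∀ (w : Fin 2 → ℝ) (c : ℝ),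
      sigmaL (blk Bm uB (vB + Q *ᵥ w) (bB + c)) = sigmaL (blk At 0 w c) := by
    intro w c
    rw [← e1 w c]
    exact hφ _
  obtain ⟨hbB, huB⟩ := step1 hQ Bm uB vB bB At key
  have key2 : ∀ (w : Fin 2 → ℝ) (c : ℝ),
      sigmaL (blk Bm 0 (vB + Q *ᵥ w) c) = sigmaL (blk At 0 w c) := by
    intro w c
    have h := key w c
    rwa [hbB, huB, zero_add] at h
  -- unit-square forms
  have hu1 : ζ1 0^2 + ζ1 1^2 = 1 := hζ1
  have hu2 : ζ2 0^2 + ζ2 1^2 = 1 := hζ2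
  -- ζ1, ζ2 independent
  have hDζ : ζ1 0 * ζ2 1 - ζ1 1 * ζ2 0 ≠ 0 := by
    intro h
    have hμ' : μ1 - μ2 ≠ 0 := fun hh => hμ (by linarith)
    rcases pm_of_det_zero hu1 hu2 h with ⟨h0, h1⟩ | ⟨h0, h1⟩
    · rw [h0, h1] at he20 he21
      have k0 : (μ1 - μ2) * ζ1 0 = 0 := by linear_combination he20 - he10
      have k1 : (μ1 - μ2) * ζ1 1 = 0 := by linear_combination he21 - he11
      exact unit_ne_zero hu1 ⟨(mul_eq_zero.mp k0).resolve_left hμ',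
        (mul_eq_zero.mp k1).resolve_left hμ'⟩
    · rw [h0, h1] at he20 he21
      have k0 : (μ1 - μ2) * ζ1 0 = 0 := by linear_combination -he10 - he20
      have k1 : (μ1 - μ2) * ζ1 1 = 0 := by linear_combination -he11 - he21
      exact unit_ne_zero hu1 ⟨(mul_eq_zero.mp k0).resolve_left hμ',
        (mul_eq_zero.mp k1).resolve_left hμ'⟩
  have hns := nonscalar_Bm hQ Bm vB At hμ hζ1 hζ2 he10 he11 he20 he21 hDζ key2
  -- η abbreviations
  obtain ⟨η10, hη10⟩ : ∃ r : ℝ, r = Q 0 0 * ζ1 0 + Q 0 1 * ζ1 1 := ⟨_, rfl⟩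
  obtain ⟨η11, hη11⟩ : ∃ r : ℝ, r = Q 1 0 * ζ1 0 + Q 1 1 * ζ1 1 := ⟨_, rfl⟩
  obtain ⟨η20, hη20⟩ : ∃ r : ℝ, r = Q 0 0 * ζ2 0 + Q 0 1 * ζ2 1 := ⟨_, rfl⟩
  obtain ⟨η21, hη21⟩ : ∃ r : ℝ, r = Q 1 0 * ζ2 0 + Q 1 1 * ζ2 1 := ⟨_, rfl⟩
  have hSQη1 : η10^2 + η11^2 = 1 := by rw [hη10, hη11, SQ_Q hQ]; exact hu1
  have hSQη2 : η20^2 + η21^2 = 1 := by rw [hη20, hη21, SQ_Q hQ]; exact hu2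
  -- the four probes
  obtain ⟨ρa, ha0, ha1, ha2⟩ := probeone hQ Bm vB At key2 hns μ1 (ζ1 0) (ζ1 1) hu1 he10 he11
  obtain ⟨ρb, hb0, hb1, hb2⟩ := probeone hQ Bm vB At key2 hns μ1 (-ζ1 0) (-ζ1 1)
    (by linear_combination hu1) (by linear_combination -he10) (by linear_combination -he11)
  obtain ⟨ρc, hc0, hc1, hc2⟩ := probeone hQ Bm vB At key2 hns μ2 (ζ2 0) (ζ2 1) hu2 he20 he21
  obtain ⟨ρd, hd0, hd1, hd2⟩ := probeone hQ Bm vB At key2 hns μ2 (-ζ2 0) (-ζ2 1)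
    (by linear_combination hu2) (by linear_combination -he20) (by linear_combination -he21)
  rw [← hη10, ← hη11] at ha0 ha1 ha2
  rw [← hη20, ← hη21] at hc0 hc1 hc2
  -- rewrite the negated probes
  have hb0' : Bm 0 0 * η10 + Bm 0 1 * η11 = ρb * η10 := by
    rw [hη10, hη11]; linear_combination -hb0
  have hb1' : Bm 1 0 * η10 + Bm 1 1 * η11 = ρb * η11 := by
    rw [hη10, hη11]; linear_combination -hb1
  have hb2' : ρb - (vB 0 * η10 + vB 1 * η11) = μ1 := by
    rw [hη10, hη11]; linear_combination hb2
  have hd0' : Bm 0 0 * η20 + Bm 0 1 * η21 = ρd * η20 := by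
    rw [hη20, hη21]; linear_combination -hd0
  have hd1' : Bm 1 0 * η20 + Bm 1 1 * η21 = ρd * η21 := by
    rw [hη20, hη21]; linear_combination -hd1
  have hd2' : ρd - (vB 0 * η20 + vB 1 * η21) = μ2 := by
    rw [hη20, hη21]; linear_combination hd2
  -- equal eigenvalues
  have hρab : ρa = ρb := by
    have d0 : (ρa - ρb) * η10 = 0 := by linear_combination hb0' - ha0
    have d1 : (ρa - ρb) * η11 = 0 := by linear_combination hb1' - ha1
    rcases not_and_or.mp (unit_ne_zero hSQη1) with h | h
    · have := (mul_eq_zero.mp d0).resolve_right h; linarith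
    · have := (mul_eq_zero.mp d1).resolve_right h; linarith
  have hρcd : ρc = ρd := by
    have d0 : (ρc - ρd) * η20 = 0 := by linear_combination hd0' - hc0
    have d1 : (ρc - ρd) * η21 = 0 := by linear_combination hd1' - hc1
    rcases not_and_or.mp (unit_ne_zero hSQη2) with h | h
    · have := (mul_eq_zero.mp d0).resolve_right h; linarith
    · have := (mul_eq_zero.mp d1).resolve_right h; linarith
  have hvη1 : vB 0 * η10 + vB 1 * η11 = 0 := by rw [hρab] at ha2; linarith [ha2, hb2']
  have hvη2 : vB 0 * η20 + vB 1 * η21 = 0 := by rw [hρcd] at hc2; linarith [hc2, hd2']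
  have hρμ1 : ρa = μ1 := by linarith [ha2, hvη1]
  have hρμ2 : ρc = μ2 := by linarith [hc2, hvη2]
  -- Bm eigen equations
  have hBη10 : Bm 0 0 * η10 + Bm 0 1 * η11 = μ1 * η10 := by rw [← hρμ1]; exact ha0
  have hBη11 : Bm 1 0 * η10 + Bm 1 1 * η11 = μ1 * η11 := by rw [← hρμ1]; exact ha1
  have hBη20 : Bm 0 0 * η20 + Bm 0 1 * η21 = μ2 * η20 := by rw [← hρμ2]; exact hc0
  have hBη21 : Bm 1 0 * η20 + Bm 1 1 * η21 = μ2 * η21 := by rw [← hρμ2]; exact hc1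
  -- independence of η's
  have hdetQ : Q 0 0 * Q 1 1 - Q 0 1 * Q 1 0 ≠ 0 := by
    intro h
    have := detQ_sq hQ
    rw [h] at this
    norm_num at this
  have hDη : η10 * η21 - η11 * η20 ≠ 0 := by
    have hfac : η10 * η21 - η11 * η20
        = (Q 0 0 * Q 1 1 - Q 0 1 * Q 1 0) * (ζ1 0 * ζ2 1 - ζ1 1 * ζ2 0) := by
      rw [hη10, hη11, hη20, hη21]; ring
    rw [hfac]
    exact mul_ne_zero hdetQ hDζ
  -- vB = 0
  have hv := cramer0 (p := vB 0) (q := vB 1) hvη1 hvη2 hDη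
  have hvB : vB = 0 := by
    funext i
    fin_cases i
    · exact hv.1
    · exact hv.2
  -- N := Q At Qᵀ has the same eigen data
  have hAtζ1 : At *ᵥ ζ1 = μ1 • ζ1 := by
    funext i
    fin_cases i
    · show (At *ᵥ ζ1) 0 = (μ1 • ζ1) 0
      rw [mulVec2, Pi.smul_apply, smul_eq_mul]; exact he10
    · show (At *ᵥ ζ1) 1 = (μ1 • ζ1) 1
      rw [mulVec2, Pi.smul_apply, smul_eq_mul]; exact he11
  have hAtζ2 : At *ᵥ ζ2 = μ2 • ζ2 := by
    funext i
    fin_cases i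
    · show (At *ᵥ ζ2) 0 = (μ2 • ζ2) 0
      rw [mulVec2, Pi.smul_apply, smul_eq_mul]; exact he20
    · show (At *ᵥ ζ2) 1 = (μ2 • ζ2) 1
      rw [mulVec2, Pi.smul_apply, smul_eq_mul]; exact he21
  have hN1 : (Q * At * Qᵀ) *ᵥ (Q *ᵥ ζ1) = μ1 • (Q *ᵥ ζ1) := by
    rw [Matrix.mulVec_mulVec, Matrix.mul_assoc (Q * At) Qᵀ Q, hQ, Matrix.mul_one,
      ← Matrix.mulVec_mulVec, hAtζ1, Matrix.mulVec_smul]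
  have hN2 : (Q * At * Qᵀ) *ᵥ (Q *ᵥ ζ2) = μ2 • (Q *ᵥ ζ2) := by
    rw [Matrix.mulVec_mulVec, Matrix.mul_assoc (Q * At) Qᵀ Q, hQ, Matrix.mul_one,
      ← Matrix.mulVec_mulVec, hAtζ2, Matrix.mulVec_smul]
  have hQζ10 : (Q *ᵥ ζ1) 0 = η10 := by rw [mulVec2, hη10]
  have hQζ11 : (Q *ᵥ ζ1) 1 = η11 := by rw [mulVec2, hη11]
  have hQζ20 : (Q *ᵥ ζ2) 0 = η20 := by rw [mulVec2, hη20]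
  have hQζ21 : (Q *ᵥ ζ2) 1 = η21 := by rw [mulVec2, hη21]
  have hN10 : (Q * At * Qᵀ) 0 0 * η10 + (Q * At * Qᵀ) 0 1 * η11 = μ1 * η10 := by
    have h := congrFun hN1 0
    rw [mulVec2, hQζ10, hQζ11, Pi.smul_apply, hQζ10, smul_eq_mul] at h
    exact h
  have hN11 : (Q * At * Qᵀ) 1 0 * η10 + (Q * At * Qᵀ) 1 1 * η11 = μ1 * η11 := by
    have h := congrFun hN1 1
    rw [mulVec2, hQζ10, hQζ11, Pi.smul_apply, hQζ11, smul_eq_mul] at h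
    exact h
  have hN20 : (Q * At * Qᵀ) 0 0 * η20 + (Q * At * Qᵀ) 0 1 * η21 = μ2 * η20 := by
    have h := congrFun hN2 0
    rw [mulVec2, hQζ20, hQζ21, Pi.smul_apply, hQζ20, smul_eq_mul] at h
    exact h
  have hN21 : (Q * At * Qᵀ) 1 0 * η20 + (Q * At * Qᵀ) 1 1 * η21 = μ2 * η21 := by
    have h := congrFun hN2 1
    rw [mulVec2, hQζ20, hQζ21, Pi.smul_apply, hQζ21, smul_eq_mul] at h
    exact h
  -- Bm = Q At Qᵀ
  have hBmEq : Bm = Q * At * Qᵀ :=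
    mat_eq_of_basis Bm (Q * At * Qᵀ) η10 η11 η20 η21 hDη
      (hBη10.trans hN10.symm) (hBη11.trans hN11.symm)
      (hBη20.trans hN20.symm) (hBη21.trans hN21.symm)
  -- assemble
  rw [← hBdef, hB2, hBmEq, huB, hvB, hbB]

open Matrix
noncomputable section

theorem image_of_S2
    (φ : Matrix (Fin 3) (Fin 3) ℝ →ₗ[ℝ] Matrix (Fin 3) (Fin 3) ℝ)
    (hφ : ∀ A, sigmaL (φ A) = sigmaL A)
    (Q : Matrix (Fin 2) (Fin 2) ℝ) (hQ : Qᵀ * Q = 1)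
    (hQφ : ∀ (v : Fin 2 → ℝ) (a : ℝ), φ (blk 0 0 v a) = blk 0 0 (Q *ᵥ v) a) :
    ∀ At : Matrix (Fin 2) (Fin 2) ℝ, φ (blk At 0 0 0) = blk (Q * At * Qᵀ) 0 0 0 := by
  intro At
  obtain ⟨t, hT⟩ : ∃ r : ℝ, r = 1 + |At 0 0 - At 1 1| + 2*|At 0 1| + 2*|At 1 0| := ⟨_, rfl⟩
  have ht1 : 1 ≤ t := by
    rw [hT]
    have := abs_nonneg (At 0 0 - At 1 1)
    have := abs_nonneg (At 0 1)
    have := abs_nonneg (At 1 0)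
    linarith
  obtain ⟨A1, hA1⟩ : ∃ M : Matrix (Fin 2) (Fin 2) ℝ, M = At + !![t, 0; 0, 2*t] := ⟨_, rfl⟩
  obtain ⟨A2, hA2⟩ : ∃ M : Matrix (Fin 2) (Fin 2) ℝ, M = !![-t, 0; 0, -(2*t)] := ⟨_, rfl⟩
  -- entries
  have e100 : A1 0 0 = At 0 0 + t := by rw [hA1]; simp
  have e101 : A1 0 1 = At 0 1 := by rw [hA1]; simp
  have e110 : A1 1 0 = At 1 0 := by rw [hA1]; simp
  have e111 : A1 1 1 = At 1 1 + 2*t := by rw [hA1]; simp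
  have e200 : A2 0 0 = -t := by rw [hA2]; simp
  have e201 : A2 0 1 = 0 := by rw [hA2]; simp
  have e210 : A2 1 0 = 0 := by rw [hA2]; simp
  have e211 : A2 1 1 = -(2*t) := by rw [hA2]; simp
  -- discriminant of A1 is positive
  have hdisc : 0 < (A1 0 0 - A1 1 1)^2 + 4*(A1 0 1 * A1 1 0) := by
    rw [e100, e101, e110, e111]
    have h1 : 1 + 2*|At 0 1| + 2*|At 1 0| ≤ t - (At 0 0 - At 1 1) := by
      rw [hT]
      have := le_abs_self (At 0 0 - At 1 1)
      linarith
    have h2 : (1 + 2*|At 0 1| + 2*|At 1 0|)^2 ≤ (t - (At 0 0 - At 1 1))^2 := by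
      have hb : (0:ℝ) ≤ 1 + 2*|At 0 1| + 2*|At 1 0| := by
        have := abs_nonneg (At 0 1); have := abs_nonneg (At 1 0); linarith
      exact pow_le_pow_left₀ hb h1 2
    have h3 : -(|At 0 1| * |At 1 0|) ≤ At 0 1 * At 1 0 := by
      rw [← abs_mul]; exact neg_abs_le _
    have h4 : (At 0 0 + t - (At 1 1 + 2*t))^2 = (t - (At 0 0 - At 1 1))^2 := by ring
    rw [h4]
    nlinarith [h2, h3, abs_nonneg (At 0 1), abs_nonneg (At 1 0)]
  obtain ⟨μ1, μ2, ζ1, ζ2, hμ, hζ1, hζ2, h10, h11, h20, h21⟩ := eigdata A1 hdisc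
  have core1 := coreφ φ hφ Q hQ hQφ A1 hμ hζ1 hζ2 h10 h11 h20 h21
  have core2 := coreφ φ hφ Q hQ hQφ A2 (μ1 := -t) (μ2 := -(2*t))
    (ζ1 := ![1, 0]) (ζ2 := ![0, 1])
    (by intro h; linarith)
    (by show (1:ℝ)^2 + (0:ℝ)^2 = 1; norm_num)
    (by show (0:ℝ)^2 + (1:ℝ)^2 = 1; norm_num)
    (by simp [e200, e201])
    (by simp [e210, e211])
    (by simp [e200, e201])
    (by simp [e210, e211])
  have hA12 : A1 + A2 = At := by
    ext i j
    fin_cases i <;> fin_cases j <;>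
      simp [Matrix.add_apply, hA1, hA2] <;> ring
  have hsum : blk At 0 0 0 = blk A1 0 0 0 + blk A2 0 0 0 := by
    rw [blk_add, hA12]
    norm_num
  have hQsum : Q * A1 * Qᵀ + Q * A2 * Qᵀ = Q * At * Qᵀ := by
    rw [← Matrix.add_mul, ← Matrix.mul_add, hA12]
  rw [hsum, map_add, core1, core2, blk_add, hQsum]
  norm_num
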